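/- An arbitrary coproduct of flat functors in A = Fun(C, G) is flat: if (X_i)_{i ∈ I} is a family of flat functors in A, then ⊕_{i ∈ I} X_i is flat. -/

import Mathlib

set_option linter.unusedSectionVars false

open CategoryTheory CategoryTheory.Limits CategoryTheory.MonoidalCategory
  CategoryTheory.MonoidalClosed

universe v u

namespace FlatFunctorsPaper

variable {G : Type u} [Category.{v} G] [Abelian G] [MonoidalCategory G]
  [SymmetricCategory G] [MonoidalClosed G] [MonoidalPreadditive G]

/-- `X⁺ = [X, J]`, the internal hom into `J`. -/
noncomputable def pObj (J X : G) : G := (ihom X).obj J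

/-- The contravariant functorial action of `(-)⁺ = [-, J]`. -/
noncomputable def pMap (J : G) {X Y : G} (f : X ⟶ Y) : pObj J Y ⟶ pObj J X :=
  (MonoidalClosed.pre f).app J

@[simp] lemma pMap_id (J X : G) : pMap J (𝟙 X) = 𝟙 (pObj J X) := by
  simp [pMap, pObj]

@[simp] lemma pMap_comp (J : G) {X Y Z : G} (f : X ⟶ Y) (g : Y ⟶ Z) :
    pMap J (f ≫ g) = pMap J g ≫ pMap J f := by
  simp [pMap]
  rfl

@[simp] lemma pMap_zero (J : G) (X Y : G) : pMap J (0 : X ⟶ Y) = 0 := by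
  apply MonoidalClosed.uncurry_injective
  unfold pObj
  rw [pMap, MonoidalClosed.uncurry_pre, MonoidalClosed.uncurry_eq]
  simp

/-- The canonical biduality morphism `X ⟶ X⁺⁺` in `G`. -/
noncomputable def bid (J X : G) : X ⟶ pObj J (pObj J X) :=
  MonoidalClosed.curry ((β_ (pObj J X) X).hom ≫ (ihom.ev X).app J)

lemma bid_natural (J : G) {X Y : G} (f : X ⟶ Y) :
    f ≫ bid J Y = bid J X ≫ pMap J (pMap J f) := by
  unfold bid pMap pObj
  apply MonoidalClosed.uncurry_injective
  rw [MonoidalClosed.uncurry_natural_left, MonoidalClosed.uncurry_natural_left]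
  rw [MonoidalClosed.uncurry_curry, MonoidalClosed.uncurry_pre]
  rw [whisker_exchange_assoc]
  rw [← MonoidalClosed.uncurry_eq, MonoidalClosed.uncurry_curry]
  simp

section Dual

variable {D : Type v} [SmallCategory D]

/-- The objectwise dual `F⁺` of a functor `F : D ⥤ G`, a functor `Dᵒᵖ ⥤ G`. -/
@[simps] noncomputable def dObj (J : G) (F : D ⥤ G) : Dᵒᵖ ⥤ G where
  obj c := pObj J (F.obj c.unop)
  map f := pMap J (F.map f.unop)
  map_id c := by simp
  map_comp f g := by simp

/-- The dual of a natural transformation. -/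
@[simps] noncomputable def dMap (J : G) {F F' : D ⥤ G} (η : F ⟶ F') :
    dObj J F' ⟶ dObj J F where
  app c := pMap J (η.app c.unop)
  naturality _ _ f := by
    show pMap J (F'.map f.unop) ≫ pMap J _ = pMap J _ ≫ pMap J (F.map f.unop)
    rw [← pMap_comp, ← pMap_comp, NatTrans.naturality]

@[simp] lemma dMap_id (J : G) (F : D ⥤ G) : dMap J (𝟙 F) = 𝟙 (dObj J F) := by
  ext c; simp; rfl

@[simp] lemma dMap_comp (J : G) {F F' F'' : D ⥤ G} (α : F ⟶ F') (β : F' ⟶ F'') :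
    dMap J (α ≫ β) = dMap J β ≫ dMap J α := by
  ext c; simp; rfl

@[simp] lemma dMap_zero (J : G) (F F' : D ⥤ G) : dMap J (0 : F ⟶ F') = 0 := by
  ext c; simp; rfl

/-- The double dual `F⁺⁺` of a functor `F : D ⥤ G`. -/
noncomputable def ddObj (J : G) (F : D ⥤ G) : D ⥤ G := opOp D ⋙ dObj J (dObj J F)

/-- The canonical natural transformation `φ_F : F ⟶ F⁺⁺`. -/
noncomputable def phi (J : G) (F : D ⥤ G) : F ⟶ ddObj J F where
  app c := bid J (F.obj c)
  naturality _ _ f := bid_natural J (F.map f)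

/-- The dual of a short exact sequence (short complex) of functors. -/
noncomputable def dSC (J : G) (S : ShortComplex (D ⥤ G)) : ShortComplex (Dᵒᵖ ⥤ G) :=
  ShortComplex.mk (dMap J S.g) (dMap J S.f) (by rw [← dMap_comp, S.zero, dMap_zero])

/-- A short exact sequence of functors is *pure* if its dual splits. -/
def IsPure (J : G) (S : ShortComplex (D ⥤ G)) : Prop := Nonempty ((dSC J S).Splitting)

/-- A functor `F` is *flat* if every short exact sequence ending in `F` is pure. -/
def IsFlat (J : G) (F : D ⥤ G) : Prop :=
  ∀ ⦃K E : D ⥤ G⦄ (i : K ⟶ E) (p : E ⟶ F) (w : i ≫ p = 0),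
    (ShortComplex.mk i p w).ShortExact → IsPure J (ShortComplex.mk i p w)

/-- A functor `X` is *cotorsion* if every short exact sequence `0 → X → E → F → 0`
with `F` flat splits. -/
def IsCotorsion (J : G) (X : D ⥤ G) : Prop :=
  ∀ ⦃E F : D ⥤ G⦄ (i : X ⟶ E) (p : E ⟶ F) (w : i ≫ p = 0),
    (ShortComplex.mk i p w).ShortExact → IsFlat J F →
      Nonempty (ShortComplex.mk i p w).Splitting

/-- A functor `P` is *pure injective* if every morphism into `P` extends along
pure monomorphisms. -/
def IsPureInjective (J : G) (P : D ⥤ G) : Prop :=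
  ∀ ⦃K E L : D ⥤ G⦄ (i : K ⟶ E) (p : E ⟶ L) (w : i ≫ p = 0),
    (ShortComplex.mk i p w).ShortExact → IsPure J (ShortComplex.mk i p w) →
      ∀ f : K ⟶ P, ∃ h : E ⟶ P, i ≫ h = f

end Dual

section ObjectLevel

/-- The dual of a short exact sequence (short complex) in `G`. -/
noncomputable def dSCG (J : G) (S : ShortComplex G) : ShortComplex G :=
  ShortComplex.mk (pMap J S.g) (pMap J S.f) (by rw [← pMap_comp, S.zero, pMap_zero])

/-- A short exact sequence in `G` is *pure* if its dual splits. -/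
def IsPureG (J : G) (S : ShortComplex G) : Prop := Nonempty ((dSCG J S).Splitting)

/-- An object `X` of `G` is *flat* if every short exact sequence ending in `X` is pure. -/
def IsFlatG (J X : G) : Prop :=
  ∀ ⦃K E : G⦄ (i : K ⟶ E) (p : E ⟶ X) (w : i ≫ p = 0),
    (ShortComplex.mk i p w).ShortExact → IsPureG J (ShortComplex.mk i p w)

/-- An object `X` of `G` is *cotorsion* if every short exact sequence
`0 → X → E → F → 0` with `F` flat splits. -/
def IsCotorsionG (J X : G) : Prop :=
  ∀ ⦃E F : G⦄ (i : X ⟶ E) (p : E ⟶ F) (w : i ≫ p = 0),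
    (ShortComplex.mk i p w).ShortExact → IsFlatG J F →
      Nonempty (ShortComplex.mk i p w).Splitting

/-- The flat objects and the cotorsion objects form a complete cotorsion theory in `G`:
every object has a special flat precover and a special cotorsion preenvelope. -/
def CompleteFlatCotorsionTheoryG (J : G) : Prop :=
  ∀ X : G,
    (∃ (Cx F : G) (i : Cx ⟶ F) (p : F ⟶ X) (w : i ≫ p = 0),
      (ShortComplex.mk i p w).ShortExact ∧ IsFlatG J F ∧ IsCotorsionG J Cx) ∧
    (∃ (Cx F : G) (i : X ⟶ Cx) (p : Cx ⟶ F) (w : i ≫ p = 0),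
      (ShortComplex.mk i p w).ShortExact ∧ IsCotorsionG J Cx ∧ IsFlatG J F)

end ObjectLevel

section Complexes

variable {D : Type v} [SmallCategory D]

/-- A *flat complex*: an acyclic complex of flat functors all of whose kernels of
differentials are flat (equivalently, a pure acyclic complex of flat functors). -/
def IsFlatComplex (J : G) (X : CochainComplex (D ⥤ G) ℤ) : Prop :=
  (∀ n, X.ExactAt n) ∧ (∀ n, IsFlat J (X.X n)) ∧
    ∀ n : ℤ, IsFlat J (kernel (X.d n (n + 1)))

/-- A *cotorsion complex*: an acyclic complex of cotorsion functors all of whose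
kernels of differentials are cotorsion. -/
def IsCotorsionComplex (J : G) (X : CochainComplex (D ⥤ G) ℤ) : Prop :=
  (∀ n, X.ExactAt n) ∧ (∀ n, IsCotorsion J (X.X n)) ∧
    ∀ n : ℤ, IsCotorsion J (kernel (X.d n (n + 1)))

/-- A complex is *dg-cotorsion* if every short exact sequence of complexes
`0 → X → E → F → 0` with `F` a flat complex splits. -/
def IsDgCotorsion (J : G) (X : CochainComplex (D ⥤ G) ℤ) : Prop :=
  ∀ ⦃E F : CochainComplex (D ⥤ G) ℤ⦄ (i : X ⟶ E) (p : E ⟶ F) (w : i ≫ p = 0),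
    (ShortComplex.mk i p w).ShortExact → IsFlatComplex J F →
      Nonempty (ShortComplex.mk i p w).Splitting

end Complexes

/-!
Purity of `0 → K → E → F → 0` amounts to `φ_K : K ⟶ K⁺⁺` extending along `K ⟶ E`: the duality
`F ↦ F⁺` is adjoint to itself on the right, so it turns the cokernel `E ⟶ F` into a kernel, and a
section of `E⁺ ⟶ K⁺` then splits the dual sequence.

For `F = ∐ Xᵢ`, pulling the sequence back along the coproduct inclusions gives sequences ending in
the flat `Xᵢ`, hence extensions of `φ_K` over each pullback. Each of them yields a section over
`Xᵢ` of the pushout of the sequence along `φ_K`; these glue by the universal property of the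
coproduct, and a section of the pushout sequence gives the required extension of `φ_K`.
-/

section Transpose

variable (J : G)

noncomputable def pFlip {X Y : G} (f : X ⟶ pObj J Y) : Y ⟶ pObj J X :=
  curry ((β_ X Y).hom ≫ uncurry f)

lemma uncurry_pFlip {X Y : G} (f : X ⟶ pObj J Y) :
    uncurry (pFlip J f) = (β_ X Y).hom ≫ uncurry f :=
  uncurry_curry _

lemma pFlip_pFlip {X Y : G} (f : X ⟶ pObj J Y) : pFlip J (pFlip J f) = f := by
  apply uncurry_injective
  rw [uncurry_pFlip, uncurry_pFlip, ← Category.assoc, SymmetricCategory.symmetry,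
    Category.id_comp]

lemma pFlip_id (X : G) : pFlip J (𝟙 (pObj J X)) = bid J X := by
  dsimp only [pFlip, bid, pObj]
  rw [uncurry_id_eq_ev]
  rfl

lemma uncurry_comp_pMap {X X' Y : G} (g : Y ⟶ pObj J X) (a : X' ⟶ X) :
    uncurry (g ≫ pMap J a) = (a ▷ Y) ≫ uncurry g := by
  erw [uncurry_eq, MonoidalCategory.whiskerLeft_comp, Category.assoc, pMap,
    id_tensor_pre_app_comp_ev, whisker_exchange_assoc]
  rfl

lemma pFlip_comp_left {X X' Y : G} (a : X' ⟶ X) (f : X ⟶ pObj J Y) :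
    pFlip J (a ≫ f) = pFlip J f ≫ pMap J a := by
  apply uncurry_injective
  erw [uncurry_pFlip, uncurry_natural_left, ← BraidedCategory.braiding_naturality_left_assoc,
    ← uncurry_pFlip, uncurry_comp_pMap]

lemma pFlip_comp_pMap {X Y Y' : G} (b : Y ⟶ Y') (f : X ⟶ pObj J Y') :
    pFlip J (f ≫ pMap J b) = b ≫ pFlip J f := by
  have h := pFlip_comp_left J b (pFlip J f)
  rw [pFlip_pFlip] at h
  rw [← h, pFlip_pFlip]

end Transpose

section DualAdjunction

variable {D : Type v} [SmallCategory D] (J : G)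

noncomputable def dualEquiv {T : Dᵒᵖ ⥤ G} {F : D ⥤ G} :
    (T ⟶ dObj J F) ≃ (F ⟶ opOp D ⋙ dObj J T) where
  toFun η :=
    { app c := pFlip J (η.app (Opposite.op c))
      naturality c c' f :=
        (pFlip_comp_pMap J (F.map f) _).symm.trans <|
          (congrArg (pFlip J) (η.naturality f.op).symm).trans (pFlip_comp_left J _ _) }
  invFun θ :=
    { app x := pFlip J (θ.app x.unop)
      naturality x y g :=
        (pFlip_comp_pMap J (T.map g) _).symm.trans <|
          (congrArg (pFlip J) (θ.naturality g.unop).symm).trans (pFlip_comp_left J _ _) }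
  left_inv η := by ext; exact pFlip_pFlip J _
  right_inv θ := by ext; exact pFlip_pFlip J _

lemma dualEquiv_id (F : D ⥤ G) : dualEquiv J (𝟙 (dObj J F)) = phi J F := by
  ext c
  exact pFlip_id J (F.obj c)

lemma dualEquiv_comp_dMap {T : Dᵒᵖ ⥤ G} {F F' : D ⥤ G} (η : T ⟶ dObj J F') (α : F ⟶ F') :
    dualEquiv J (η ≫ dMap J α) = α ≫ dualEquiv J η := by
  ext c
  exact pFlip_comp_pMap J _ _

lemma dualEquiv_zero {T : Dᵒᵖ ⥤ G} {F : D ⥤ G} : dualEquiv J (0 : T ⟶ dObj J F) = 0 := by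
  simpa using dualEquiv_comp_dMap J (0 : T ⟶ dObj J F) (0 : F ⟶ F)

lemma comp_dMap_eq_id_iff {K E : D ⥤ G} (i : K ⟶ E) (s : dObj J K ⟶ dObj J E) :
    s ≫ dMap J i = 𝟙 _ ↔ i ≫ dualEquiv J s = phi J K := by
  rw [← dualEquiv_comp_dMap, ← dualEquiv_id, (dualEquiv J).injective.eq_iff]

lemma mono_dSC_f {S : ShortComplex (D ⥤ G)} (hS : S.ShortExact) : Mono (dSC J S).f := by
  have := hS.epi_g
  refine ⟨fun {T} (a b : T ⟶ dObj J S.X₃) hab => (dualEquiv J).injective ?_⟩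
  rw [← cancel_epi S.g, ← dualEquiv_comp_dMap, ← dualEquiv_comp_dMap]
  exact congrArg (dualEquiv J) hab

lemma exact_dSC {S : ShortComplex (D ⥤ G)} (hS : S.ShortExact) : (dSC J S).Exact := by
  have := hS.epi_g
  rw [ShortComplex.exact_iff_exact_up_to_refinements]
  intro T (η : T ⟶ dObj J S.X₂) hη
  have hf : S.f ≫ dualEquiv J η = 0 := by
    rw [← dualEquiv_comp_dMap]
    exact (congrArg (dualEquiv J) hη).trans (dualEquiv_zero J)
  refine ⟨T, 𝟙 T, inferInstance, (dualEquiv J).symm (hS.exact.desc _ hf), ?_⟩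
  show 𝟙 T ≫ η = _ ≫ dMap J S.g
  apply (dualEquiv J).injective
  rw [Category.id_comp, dualEquiv_comp_dMap, Equiv.apply_symm_apply, hS.exact.g_desc]

theorem isPure_iff_exists_comp_eq_phi {S : ShortComplex (D ⥤ G)} (hS : S.ShortExact) :
    IsPure J S ↔ ∃ ζ : S.X₂ ⟶ ddObj J S.X₁, S.f ≫ ζ = phi J S.X₁ := by
  constructor
  · rintro ⟨σ⟩
    exact ⟨dualEquiv J σ.s, (comp_dMap_eq_id_iff J S.f σ.s).1 σ.s_g⟩
  · rintro ⟨ζ, hζ⟩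
    have s_g := (comp_dMap_eq_id_iff J S.f ((dualEquiv J).symm ζ)).2
      (((congrArg (S.f ≫ ·) ((dualEquiv J).apply_symm_apply ζ))).trans hζ)
    exact ⟨.ofExactOfSection _ (exact_dSC J hS) _ s_g (mono_dSC_f J hS)⟩

end DualAdjunction

section PullbackPushout

variable {A : Type*} [Category A] [Abelian A]

noncomputable abbrev pullbackSC (S : ShortComplex A) {Z : A} (f : Z ⟶ S.X₃) : ShortComplex A :=
  ShortComplex.mk (pullback.lift S.f 0 (by rw [S.zero, zero_comp])) (pullback.snd S.g f)
    (pullback.lift_snd _ _ _)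

noncomputable abbrev pushoutSC (S : ShortComplex A) {T : A} (φ : S.X₁ ⟶ T) : ShortComplex A :=
  ShortComplex.mk (pushout.inr S.f φ) (pushout.desc S.g 0 (by rw [S.zero, comp_zero]))
    (pushout.inr_desc _ _ _)

variable {S : ShortComplex A}

lemma shortExact_pullbackSC (hS : S.ShortExact) {Z : A} (f : Z ⟶ S.X₃) :
    (pullbackSC S f).ShortExact := by
  have := hS.mono_f
  have := hS.epi_g
  have : Mono (pullbackSC S f).f := mono_of_mono_fac (pullback.lift_fst _ _ _)
  refine { exact := ?_, epi_g := inferInstanceAs (Epi (pullback.snd S.g f)) }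
  rw [ShortComplex.exact_iff_exact_up_to_refinements]
  intro W x (hx : x ≫ pullback.snd S.g f = 0)
  have hfst : (x ≫ pullback.fst S.g f) ≫ S.g = 0 := by
    rw [Category.assoc, pullback.condition, reassoc_of% hx, zero_comp]
  refine ⟨W, 𝟙 W, inferInstance, hS.exact.lift _ hfst, ?_⟩
  rw [Category.id_comp]
  apply pullback.hom_ext
  · rw [Category.assoc, pullback.lift_fst, hS.exact.lift_f]
  · rw [Category.assoc, pullback.lift_snd, comp_zero, hx]

lemma shortExact_pushoutSC (hS : S.ShortExact) {T : A} (φ : S.X₁ ⟶ T) :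
    (pushoutSC S φ).ShortExact := by
  have := hS.mono_f
  have := hS.epi_g
  have : Epi (pushoutSC S φ).g := epi_of_epi_fac (pushout.inl_desc _ _ _)
  refine { exact := ?_, mono_f := inferInstanceAs (Mono (pushout.inr S.f φ)) }
  rw [ShortComplex.exact_iff_exact_up_to_refinements]
  intro W x hx
  obtain ⟨W', π, _, a, c, hac⟩ :=
    (IsPushout.of_hasPushout S.f φ).hom_eq_add_up_to_refinements x
  have ha : a ≫ S.g = 0 := by
    have h := congrArg (· ≫ (pushoutSC S φ).g) hac
    dsimp only at h
    rwa [Category.assoc, hx, comp_zero, Preadditive.add_comp, Category.assoc, Category.assoc,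
      pushout.inl_desc, pushout.inr_desc, comp_zero, add_zero, eq_comm] at h
  obtain ⟨W'', π', _, y, hy⟩ := hS.exact.exact_up_to_refinements a ha
  refine ⟨W'', π' ≫ π, epi_comp _ _, y ≫ φ + π' ≫ c, ?_⟩
  simp only [pushoutSC, Category.assoc, hac, Preadditive.comp_add, Preadditive.add_comp]
  rw [reassoc_of% hy, pushout.condition]

lemma exists_lift_pushoutSC_of_extension (hS : S.ShortExact) {T : A} (φ : S.X₁ ⟶ T) {Z : A}
    (f : Z ⟶ S.X₃) (h : ∃ ζ : (pullbackSC S f).X₂ ⟶ T, (pullbackSC S f).f ≫ ζ = φ) :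
    ∃ σ : Z ⟶ (pushoutSC S φ).X₂, σ ≫ (pushoutSC S φ).g = f := by
  obtain ⟨ζ, hζ⟩ := h
  have hP := shortExact_pullbackSC hS f
  have := hP.epi_g
  have hm : (pullbackSC S f).f ≫
      (pullback.fst S.g f ≫ pushout.inl S.f φ - ζ ≫ pushout.inr S.f φ) = 0 := by
    rw [Preadditive.comp_sub, reassoc_of% hζ, ← Category.assoc, pullback.lift_fst,
      pushout.condition, sub_self]
  refine ⟨hP.exact.desc _ hm, ?_⟩
  rw [← cancel_epi (pullbackSC S f).g, hP.exact.g_desc_assoc, Preadditive.sub_comp,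
    Category.assoc, Category.assoc, pushout.inl_desc, pushout.inr_desc, comp_zero, sub_zero,
    pullback.condition]

lemma exists_extension_of_section_pushoutSC (hS : S.ShortExact) {T : A} (φ : S.X₁ ⟶ T)
    (σ : S.X₃ ⟶ (pushoutSC S φ).X₂) (hσ : σ ≫ (pushoutSC S φ).g = 𝟙 _) :
    ∃ ζ : S.X₂ ⟶ T, S.f ≫ ζ = φ := by
  have hP := shortExact_pushoutSC hS φ
  let split := ShortComplex.Splitting.ofExactOfSection _ hP.exact σ hσ hP.mono_f
  refine ⟨pushout.inl S.f φ ≫ split.r, ?_⟩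
  rw [pushout.condition_assoc]
  exact (congrArg (φ ≫ ·) split.f_r).trans (Category.comp_id φ)

theorem exists_extension_of_isColimit_cofan (hS : S.ShortExact) {I : Type*} {X : I → A}
    {ι : ∀ j, X j ⟶ S.X₃} (hc : IsColimit (Cofan.mk S.X₃ ι)) {T : A} (φ : S.X₁ ⟶ T)
    (h : ∀ j, ∃ ζ : (pullbackSC S (ι j)).X₂ ⟶ T, (pullbackSC S (ι j)).f ≫ ζ = φ) :
    ∃ ζ : S.X₂ ⟶ T, S.f ≫ ζ = φ := by
  choose σ hσ using fun j => exists_lift_pushoutSC_of_extension hS φ (ι j) (h j)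
  refine exists_extension_of_section_pushoutSC hS φ (Cofan.IsColimit.desc hc σ) ?_
  refine Cofan.IsColimit.hom_ext hc _ _ fun j => ?_
  rw [Cofan.IsColimit.fac_assoc, hσ]
  exact (Category.comp_id _).symm

end PullbackPushout

section Statement

variable {C : Type v} [SmallCategory C]
variable [HasLimits G] [HasColimits G] [AB5 G] [HasSeparator G]

theorem statement7_general (J : G)
    {I : Type v} (X : I → (C ⥤ G)) (hX : ∀ i : I, IsFlat J (X i)) :
    IsFlat J (∐ X) := by
  intro K E i p w hS
  rw [isPure_iff_exists_comp_eq_phi J hS]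
  refine exists_extension_of_isColimit_cofan hS (coproductIsCoproduct X) _ fun j => ?_
  have hSj := shortExact_pullbackSC hS (Sigma.ι X j)
  exact (isPure_iff_exists_comp_eq_phi J hSj).1 (hX j _ _ _ hSj)

/-- An arbitrary coproduct of flat functors in `A = Fun(C, G)` is flat. -/
theorem statement7 (J : G) [Injective J] (hJ : IsCoseparator J)
    {I : Type v} (X : I → (C ⥤ G)) (hX : ∀ i : I, IsFlat J (X i)) :
    IsFlat J (∐ X) :=
  statement7_general J X hX

end Statement

end FlatFunctorsPaper
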